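/- For ω ∈ D(ℝ^d) (càdlàg paths) and u > 0, define recursively t⁰(ω,u) = 0 and t^{p+1}(ω,u) = inf{ t > t^p(ω,u) : ‖Δω(t)‖ > u }. If ωₙ → ω locally uniformly and u > 0 is such that no jump of ω has norm exactly u (i.e. u ∉ { ‖Δω(t)‖ : t > 0 }), then for every t > 0 with ‖Δω(t)‖ ≠ u and every p with t^p(ω,u) ≤ t < t^{p+1}(ω,u), eventually the jumps of ωₙ of size exceeding u in (0,t] occur exactly at the times t¹(ω,u), …, t^p(ω,u). -/

import Mathlib

open Filter Set
open scoped NNReal ENNReal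

/-- A path `ω : [0,∞) → E` is càdlàg. -/
def Cadlag {E : Type*} [TopologicalSpace E] (ω : ℝ≥0 → E) : Prop :=
  (∀ t, ContinuousWithinAt ω (Ici t) t) ∧
  (∀ t : ℝ≥0, 0 < t → ∃ l, Tendsto ω (nhdsWithin t (Iio t)) (nhds l))

/-- Local uniform convergence of paths: uniform convergence on each `[0, T]`. -/
def LocUnifTendsto {E : Type*} [PseudoMetricSpace E]
    (ωn : ℕ → ℝ≥0 → E) (ω : ℝ≥0 → E) : Prop :=
  ∀ T : ℝ≥0, TendstoUniformlyOn ωn ω atTop (Icc 0 T)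

/-- The jump `Δω(t) = ω(t) - ω(t-)`. -/
noncomputable def pathJump {d : ℕ} (ω : ℝ≥0 → EuclideanSpace ℝ (Fin d))
    (t : ℝ≥0) : EuclideanSpace ℝ (Fin d) :=
  ω t - Function.leftLim ω t

/-- The successive times of jumps of norm exceeding `u`:
`t⁰ = 0`, `t^{p+1} = inf { t > t^p : ‖Δω(t)‖ > u }` (with `inf ∅ = ∞`). -/
noncomputable def jumpTimes {d : ℕ} (ω : ℝ≥0 → EuclideanSpace ℝ (Fin d))
    (u : ℝ) : ℕ → ℝ≥0∞
  | 0 => 0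
  | p + 1 =>
      ⨅ (s : ℝ≥0) (_ : jumpTimes ω u p < (s : ℝ≥0∞)) (_ : u < ‖pathJump ω s‖),
        (s : ℝ≥0∞)

/-!
A càdlàg path has right limits and left limits everywhere, so near any point all jumps but the
one at the point itself are small; by compactness it has only finitely many jumps of norm `> r`
on `[0, T]`. Hence, `u` not being a jump size of `ω`, the jump sizes of `ω` on `(0, t]` keep a
distance `ε > 0` from `u`. Once `ωn` is `ε / 4`-close to `ω` on `[0, t]`, the jumps of `ωn` and `ω`
differ by at most `ε / 2`, so exactly the same times carry jumps of norm `> u`. For `ω` these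
times are `t¹, …, t^p`: the same finiteness shows that each infimum defining `t^{i+1}` is attained.
-/

open scoped Topology
open Function

theorem lt_iff_lt_of_abs_sub_lt_abs_sub {a b c : ℝ} (h : |a - b| < |b - c|) :
    c < a ↔ c < b := by
  rcases abs_cases (a - b) with ⟨h₁, h₁'⟩ | ⟨h₁, h₁'⟩ <;>
    rcases abs_cases (b - c) with ⟨h₂, h₂'⟩ | ⟨h₂, h₂'⟩ <;>
    constructor <;> intro <;> linarith

namespace Cadlag

variable {E : Type*}

theorem tendsto_leftLim [TopologicalSpace E] [T2Space E] {ω : ℝ≥0 → E} (hω : Cadlag ω)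
    {s : ℝ≥0} (hs : 0 < s) : Tendsto ω (𝓝[<] s) (𝓝 (leftLim ω s)) := by
  obtain ⟨l, hl⟩ := hω.2 s hs
  have := nhdsLT_neBot_of_exists_lt ⟨0, hs⟩
  rwa [leftLim_eq_of_tendsto hl]

variable [NormedAddCommGroup E] {ω : ℝ≥0 → E}

theorem norm_sub_leftLim_le_of_forall_Ioo (hω : Cadlag ω) {a b y : ℝ≥0} {c : E} {r : ℝ}
    (hy : y ∈ Ioo a b) (h : ∀ z ∈ Ioo a b, ‖ω z - c‖ ≤ r) :
    ‖ω y - leftLim ω y‖ ≤ 2 * r := by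
  have hy₀ : 0 < y := pos_of_gt hy.1
  have := nhdsLT_neBot_of_exists_lt ⟨0, hy₀⟩
  have hleft : ‖leftLim ω y - c‖ ≤ r :=
    le_of_tendsto ((hω.tendsto_leftLim hy₀).sub_const c).norm <| by
      filter_upwards [Ioo_mem_nhdsLT hy.1] with z hz using h z ⟨hz.1, hz.2.trans hy.2⟩
  calc ‖ω y - leftLim ω y‖ = ‖(ω y - c) - (leftLim ω y - c)‖ := by rw [sub_sub_sub_cancel_right]
    _ ≤ ‖ω y - c‖ + ‖leftLim ω y - c‖ := norm_sub_le _ _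
    _ ≤ 2 * r := by linarith [h y hy]

theorem eventually_nhdsNE_norm_sub_leftLim_le (hω : Cadlag ω) (x : ℝ≥0) {r : ℝ} (hr : 0 < r) :
    ∀ᶠ y in 𝓝[≠] x, ‖ω y - leftLim ω y‖ ≤ r := by
  have h2r : 2 * (r / 2) = r := by ring
  rw [← nhdsLT_sup_nhdsGT, eventually_sup]
  constructor
  · rcases eq_zero_or_pos x with rfl | hx
    · simp
    obtain ⟨a, ha, hI⟩ := (mem_nhdsLT_iff_exists_Ioo_subset' hx).1
      ((hω.tendsto_leftLim hx) (Metric.closedBall_mem_nhds _ (half_pos hr)))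
    filter_upwards [Ioo_mem_nhdsLT ha] with y hy
    exact h2r ▸ hω.norm_sub_leftLim_le_of_forall_Ioo hy fun z hz ↦
      mem_closedBall_iff_norm.1 (hI hz)
  · obtain ⟨b, hb, hI⟩ := mem_nhdsGT_iff_exists_Ioo_subset.1
      (((hω.1 x).mono Ioi_subset_Ici_self) (Metric.closedBall_mem_nhds _ (half_pos hr)))
    filter_upwards [Ioo_mem_nhdsGT hb] with y hy
    exact h2r ▸ hω.norm_sub_leftLim_le_of_forall_Ioo hy fun z hz ↦
      mem_closedBall_iff_norm.1 (hI hz)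

theorem finite_setOf_norm_sub_leftLim_gt (hω : Cadlag ω) {r : ℝ} (hr : 0 < r) (T : ℝ≥0) :
    {s | 0 < s ∧ s ≤ T ∧ r < ‖ω s - leftLim ω s‖}.Finite := by
  by_contra hinf
  obtain ⟨x, -, hx⟩ := Set.Infinite.exists_accPt_of_subset_isCompact hinf isCompact_Icc
    fun s hs ↦ ⟨zero_le, hs.2.1⟩
  obtain ⟨y, hy, hy'⟩ := ((accPt_iff_frequently_nhdsNE.1 hx).and_eventually
    (hω.eventually_nhdsNE_norm_sub_leftLim_le x hr)).exists
  exact hy.2.2.not_ge hy'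

theorem exists_pos_le_abs_norm_sub_leftLim_sub (hω : Cadlag ω) {u : ℝ} (hu : 0 < u)
    (hnotU : ∀ s, 0 < s → ‖ω s - leftLim ω s‖ ≠ u) (T : ℝ≥0) :
    ∃ ε > 0, ∀ s, 0 < s → s ≤ T → ε ≤ |‖ω s - leftLim ω s‖ - u| := by
  have hfin := hω.finite_setOf_norm_sub_leftLim_gt (half_pos hu) T
  have hε : ∀ᶠ ε in 𝓝[>] (0 : ℝ), ε ≤ u / 2 ∧
      ∀ s ∈ {s | 0 < s ∧ s ≤ T ∧ u / 2 < ‖ω s - leftLim ω s‖}, ε ≤ |‖ω s - leftLim ω s‖ - u| :=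
    eventually_nhdsWithin_of_eventually_nhds <| (eventually_le_nhds (half_pos hu)).and <|
      (eventually_all_finite hfin).2 fun s hs ↦
        eventually_le_nhds (abs_pos.2 (sub_ne_zero.2 (hnotU s hs.1)))
  obtain ⟨ε, ⟨hεu, hεF⟩, hε₀⟩ := (hε.and self_mem_nhdsWithin).exists
  refine ⟨ε, hε₀, fun s hs hsT ↦ ?_⟩
  by_cases hbig : u / 2 < ‖ω s - leftLim ω s‖
  · exact hεF s ⟨hs, hsT, hbig⟩
  · rw [abs_sub_comm, abs_of_pos (by linarith)]
    linarith

end Cadlag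

theorem norm_sub_leftLim_sub_sub_leftLim_le {E : Type*} [NormedAddCommGroup E]
    {ω₁ ω₂ : ℝ≥0 → E} (h₁ : Cadlag ω₁) (h₂ : Cadlag ω₂) {T s : ℝ≥0} {ε : ℝ}
    (h : ∀ y ∈ Icc 0 T, ‖ω₁ y - ω₂ y‖ ≤ ε) (hs : 0 < s) (hsT : s ≤ T) :
    ‖(ω₁ s - leftLim ω₁ s) - (ω₂ s - leftLim ω₂ s)‖ ≤ 2 * ε := by
  have := nhdsLT_neBot_of_exists_lt ⟨0, hs⟩
  have hleft : ‖leftLim ω₁ s - leftLim ω₂ s‖ ≤ ε :=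
    le_of_tendsto ((h₁.tendsto_leftLim hs).sub (h₂.tendsto_leftLim hs)).norm <| by
      filter_upwards [self_mem_nhdsWithin] with z (hz : z < s)
      exact h z ⟨zero_le, hz.le.trans hsT⟩
  calc ‖(ω₁ s - leftLim ω₁ s) - (ω₂ s - leftLim ω₂ s)‖
        = ‖(ω₁ s - ω₂ s) - (leftLim ω₁ s - leftLim ω₂ s)‖ := by congr 1; abel
    _ ≤ ‖ω₁ s - ω₂ s‖ + ‖leftLim ω₁ s - leftLim ω₂ s‖ := norm_sub_le _ _
    _ ≤ 2 * ε := by linarith [h s ⟨zero_le, hsT⟩]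

theorem LocUnifTendsto.eventually_setOf_norm_sub_leftLim_gt_eq {E : Type*}
    [NormedAddCommGroup E] {ωn : ℕ → ℝ≥0 → E} {ω : ℝ≥0 → E} (hconv : LocUnifTendsto ωn ω)
    (hωn : ∀ n, Cadlag (ωn n)) (hω : Cadlag ω) {u : ℝ} (hu : 0 < u)
    (hnotU : ∀ s, 0 < s → ‖ω s - leftLim ω s‖ ≠ u) (T : ℝ≥0) :
    ∀ᶠ n in atTop, {s | 0 < s ∧ s ≤ T ∧ u < ‖ωn n s - leftLim (ωn n) s‖} =
      {s | 0 < s ∧ s ≤ T ∧ u < ‖ω s - leftLim ω s‖} := by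
  obtain ⟨ε, hε, hgap⟩ := hω.exists_pos_le_abs_norm_sub_leftLim_sub hu hnotU T
  filter_upwards [Metric.tendstoUniformlyOn_iff.1 (hconv T) (ε / 4) (by positivity)] with n hn
  ext s
  refine and_congr_right fun hs ↦ and_congr_right fun hsT ↦ ?_
  have hclose := norm_sub_leftLim_sub_sub_leftLim_le (hωn n) hω
    (fun y hy ↦ by rw [← dist_eq_norm, dist_comm]; exact (hn y hy).le) hs hsT
  refine lt_iff_lt_of_abs_sub_lt_abs_sub ?_
  linarith [abs_norm_sub_norm_le (ωn n s - leftLim (ωn n) s) (ω s - leftLim ω s),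
    hgap s hs hsT]

section jumpTimes

variable {d : ℕ} {ω : ℝ≥0 → EuclideanSpace ℝ (Fin d)} {u : ℝ}

theorem jumpTimes_succ_le {p : ℕ} {s : ℝ≥0} (hs : jumpTimes ω u p < s)
    (hjump : u < ‖pathJump ω s‖) : jumpTimes ω u (p + 1) ≤ s := by
  rw [jumpTimes]
  exact iInf₂_le_of_le s hs (iInf_le _ hjump)

theorem jumpTimes_mono : Monotone (jumpTimes ω u) :=
  monotone_nat_of_le_succ fun p ↦ by
    rw [jumpTimes]
    exact le_iInf₂ fun _ hs ↦ le_iInf fun _ ↦ hs.le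

theorem exists_jumpTimes_succ_eq (hω : Cadlag ω) (hu : 0 < u) {p : ℕ}
    (h : jumpTimes ω u (p + 1) ≠ ⊤) :
    ∃ s : ℝ≥0, jumpTimes ω u (p + 1) = s ∧ jumpTimes ω u p < s ∧ u < ‖pathJump ω s‖ := by
  obtain ⟨s₀, hs₀, hjump₀⟩ : ∃ s : ℝ≥0, jumpTimes ω u p < s ∧ u < ‖pathJump ω s‖ := by
    by_contra! hnone
    refine h (top_unique ?_)
    rw [jumpTimes]
    exact le_iInf₂ fun s hs ↦ le_iInf fun hjump ↦ absurd hjump (hnone s hs).not_gt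
  have hpos : ∀ {s : ℝ≥0}, jumpTimes ω u p < s → 0 < s := fun hs ↦
    ENNReal.coe_pos.1 (pos_of_gt hs)
  -- below `s₀` there are only finitely many candidates, so the infimum is a minimum
  let B := {s : ℝ≥0 | (0 < s ∧ s ≤ s₀ ∧ u < ‖pathJump ω s‖) ∧ jumpTimes ω u p < s}
  have hBfin : B.Finite := (hω.finite_setOf_norm_sub_leftLim_gt hu s₀).subset fun _ hs ↦ hs.1
  obtain ⟨m, ⟨⟨-, -, hjump⟩, hm⟩, hmin⟩ :=
    B.exists_min_image id hBfin ⟨s₀, ⟨hpos hs₀, le_rfl, hjump₀⟩, hs₀⟩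
  refine ⟨m, (jumpTimes_succ_le hm hjump).antisymm ?_, hm, hjump⟩
  rw [jumpTimes]
  refine le_iInf₂ fun s hs ↦ le_iInf fun hjump ↦ ENNReal.coe_le_coe.2 ?_
  rcases le_or_gt s s₀ with hss₀ | hs₀s
  · exact hmin s ⟨⟨hpos hs, hss₀, hjump⟩, hs⟩
  · exact (hmin s₀ ⟨⟨hpos hs₀, le_rfl, hjump₀⟩, hs₀⟩).trans hs₀s.le

theorem setOf_norm_pathJump_gt_eq (hω : Cadlag ω) (hu : 0 < u) {t : ℝ≥0} {p : ℕ}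
    (hp₁ : jumpTimes ω u p ≤ t) (hp₂ : t < jumpTimes ω u (p + 1)) :
    {s : ℝ≥0 | 0 < s ∧ s ≤ t ∧ u < ‖pathJump ω s‖} =
      {s : ℝ≥0 | ∃ i, 1 ≤ i ∧ i ≤ p ∧ jumpTimes ω u i = s} := by
  ext s
  constructor
  · rintro ⟨hs, hst, hjump⟩
    classical
    -- `s` lies in `(t^i, t^{i+1}]` for the last index `i ≤ p` with `t^i < s`
    set i := Nat.findGreatest (fun i ↦ jumpTimes ω u i < s) p
    have hi : jumpTimes ω u i < s :=
      Nat.findGreatest_spec (P := fun i ↦ jumpTimes ω u i < s) (Nat.zero_le p)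
        (by simpa [jumpTimes] using hs)
    have hle : jumpTimes ω u (i + 1) ≤ s := jumpTimes_succ_le hi hjump
    have hip : i < p := by
      refine (Nat.findGreatest_le p).lt_of_ne fun (hip : i = p) ↦ ?_
      rw [hip] at hle
      exact (hle.trans (ENNReal.coe_le_coe.2 hst)).not_gt hp₂
    have hge : (s : ℝ≥0∞) ≤ jumpTimes ω u (i + 1) :=
      not_lt.1 (Nat.findGreatest_is_greatest (Nat.lt_succ_self i) hip)
    exact ⟨i + 1, i.succ_pos, hip, hle.antisymm hge⟩
  · rintro ⟨_ | j, hj, hjp, hjs⟩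
    · omega
    obtain ⟨s', hs', hjs', hjump⟩ := exists_jumpTimes_succ_eq hω hu (hjs ▸ ENNReal.coe_ne_top)
    obtain rfl : s' = s := by exact_mod_cast hs'.symm.trans hjs
    refine ⟨ENNReal.coe_pos.1 (pos_of_gt hjs'), ?_, hjump⟩
    exact_mod_cast hjs ▸ (jumpTimes_mono hjp).trans hp₁

end jumpTimes

theorem stmt12_general {d : ℕ}
    (ωn : ℕ → ℝ≥0 → EuclideanSpace ℝ (Fin d)) (ω : ℝ≥0 → EuclideanSpace ℝ (Fin d))
    (hωn : ∀ n, Cadlag (ωn n)) (hω : Cadlag ω)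
    (hconv : LocUnifTendsto ωn ω)
    (u : ℝ) (hu : 0 < u)
    (hnotU : ∀ s : ℝ≥0, 0 < s → ‖pathJump ω s‖ ≠ u)
    (t : ℝ≥0)
    (p : ℕ) (hp₁ : jumpTimes ω u p ≤ (t : ℝ≥0∞))
    (hp₂ : (t : ℝ≥0∞) < jumpTimes ω u (p + 1)) :
    ∀ᶠ n in atTop,
      {s : ℝ≥0 | 0 < s ∧ s ≤ t ∧ u < ‖pathJump (ωn n) s‖} =
      {s : ℝ≥0 | ∃ i, 1 ≤ i ∧ i ≤ p ∧ jumpTimes ω u i = (s : ℝ≥0∞)} := by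
  filter_upwards [hconv.eventually_setOf_norm_sub_leftLim_gt_eq hωn hω hu hnotU t] with n hn
  exact hn.trans (setOf_norm_pathJump_gt_eq hω hu hp₁ hp₂)

theorem stmt12 {d : ℕ}
    (ωn : ℕ → ℝ≥0 → EuclideanSpace ℝ (Fin d)) (ω : ℝ≥0 → EuclideanSpace ℝ (Fin d))
    (hωn : ∀ n, Cadlag (ωn n)) (hω : Cadlag ω)
    (hconv : LocUnifTendsto ωn ω)
    (u : ℝ) (hu : 0 < u)
    (hnotU : ∀ s : ℝ≥0, 0 < s → ‖pathJump ω s‖ ≠ u)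
    (t : ℝ≥0) (ht : 0 < t)
    (p : ℕ) (hp₁ : jumpTimes ω u p ≤ (t : ℝ≥0∞))
    (hp₂ : (t : ℝ≥0∞) < jumpTimes ω u (p + 1)) :
    ∀ᶠ n in atTop,
      {s : ℝ≥0 | 0 < s ∧ s ≤ t ∧ u < ‖pathJump (ωn n) s‖} =
      {s : ℝ≥0 | ∃ i, 1 ≤ i ∧ i ≤ p ∧ jumpTimes ω u i = (s : ℝ≥0∞)} :=
  stmt12_general ωn ω hωn hω hconv u hu hnotU t p hp₁ hp₂
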